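/- arXiv:1604.02063 — 2 statements merged into one kernel-verified Lean document; each statement's English description precedes it below -/
import Mathlib

section
/- In the homogeneous universal enveloping algebra U_h(sl₂), with generators x, y, z, h where h is central and yx = xy + 2xh, zx = xz - yh, zy = yz + 2zh, for all natural numbers a, b the normal-ordering identity (z^a/a!)(y^b/b!) = ∑_{k=0}^{b} (2a)^k · (y^{b-k}/(b-k)!) · (z^a/a!) · (h^k/k!) holds. -/
/-! Since `h` commutes with `y` and `z`, the relation `zy = yz + 2zh` reads `z y = (y + 2h) z`, and
induction on `a` gives `zᵃ y = (y + 2ah) zᵃ`, hence `zᵃ yᵇ = (y + 2ah)ᵇ zᵃ`. Dividing by `a! b!` and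
expanding the divided power of the sum of the commuting elements `y` and `2ah` by the binomial
theorem gives the identity, once `hᵏ` is moved past `zᵃ`. -/

namespace UhSl2

/-- Generators of `U_h(sl₂)`. -/
inductive Gen : Type | x | y | z | h

variable (K : Type*) [Field K]

open FreeAlgebra in
/-- Defining relations of `U_h(sl₂)`: `h` is central, `yx = xy + 2xh`,
`zx = xz - yh`, `zy = yz + 2zh`. -/
inductive Rel : FreeAlgebra K Gen → FreeAlgebra K Gen → Prop
  | yx : Rel (ι K Gen.y * ι K Gen.x) (ι K Gen.x * ι K Gen.y + 2 * (ι K Gen.x * ι K Gen.h))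
  | zx : Rel (ι K Gen.z * ι K Gen.x) (ι K Gen.x * ι K Gen.z - ι K Gen.y * ι K Gen.h)
  | zy : Rel (ι K Gen.z * ι K Gen.y) (ι K Gen.y * ι K Gen.z + 2 * (ι K Gen.z * ι K Gen.h))
  | hx : Rel (ι K Gen.h * ι K Gen.x) (ι K Gen.x * ι K Gen.h)
  | hy : Rel (ι K Gen.h * ι K Gen.y) (ι K Gen.y * ι K Gen.h)
  | hz : Rel (ι K Gen.h * ι K Gen.z) (ι K Gen.z * ι K Gen.h)

/-- The homogeneous universal enveloping algebra `U_h(sl₂)`. -/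
abbrev Uh := RingQuot (Rel K)

noncomputable def X : Uh K := RingQuot.mkAlgHom K (Rel K) (FreeAlgebra.ι K Gen.x)
noncomputable def Y : Uh K := RingQuot.mkAlgHom K (Rel K) (FreeAlgebra.ι K Gen.y)
noncomputable def Z : Uh K := RingQuot.mkAlgHom K (Rel K) (FreeAlgebra.ι K Gen.z)
noncomputable def H : Uh K := RingQuot.mkAlgHom K (Rel K) (FreeAlgebra.ι K Gen.h)

/-- Divided power `u^n / n!`. -/
noncomputable def dp (n : ℕ) (u : Uh K) : Uh K := (n.factorial : K)⁻¹ • u ^ n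

end UhSl2

open Finset
open scoped Nat

theorem SemiconjBy.pow_left_add_nsmul {R : Type*} [Semiring R] {z y d : R}
    (h : SemiconjBy z y (y + d)) (hd : Commute z d) (n : ℕ) :
    SemiconjBy (z ^ n) y (y + n • d) := by
  induction n with
  | zero => simp
  | succ n ih =>
    have hstep : SemiconjBy z (y + n • d) (y + (n + 1) • d) := by
      rw [succ_nsmul, ← add_assoc, add_right_comm]
      exact h.add_right (hd.smul_right n)
    rw [pow_succ']
    exact hstep.mul_left ih

theorem Commute.inv_factorial_smul_add_pow {K A : Type*} [Semifield K] [CharZero K] [Semiring A]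
    [Algebra K A] {x y : A} (h : Commute x y) (n : ℕ) :
    (n ! : K)⁻¹ • (x + y) ^ n =
      ∑ k ∈ range (n + 1), ((n - k)! : K)⁻¹ • x ^ (n - k) * ((k ! : K)⁻¹ • y ^ k) := by
  rw [add_comm, h.symm.add_pow, smul_sum]
  refine sum_congr rfl fun k hk => ?_
  have hkn : k ≤ n := Nat.lt_succ_iff.mp (mem_range.mp hk)
  rw [← (h.pow_pow (n - k) k).eq, ← Nat.cast_comm, ← nsmul_eq_mul, ← Nat.cast_smul_eq_nsmul K,
    smul_smul, smul_mul_smul_comm, Nat.cast_choose K hkn]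
  have hfact : (n ! : K) ≠ 0 := Nat.cast_ne_zero.2 n.factorial_ne_zero
  congr 1
  field_simp

namespace UhSl2

variable (K : Type*) [Field K]

theorem commute_H_Y : Commute (H K) (Y K) := by
  show H K * Y K = Y K * H K
  simpa only [H, Y, map_mul] using RingQuot.mkAlgHom_rel K Rel.hy

theorem commute_H_Z : Commute (H K) (Z K) := by
  show H K * Z K = Z K * H K
  simpa only [H, Z, map_mul] using RingQuot.mkAlgHom_rel K Rel.hz

theorem semiconjBy_Z_Y : SemiconjBy (Z K) (Y K) (Y K + (2 : K) • H K) := by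
  have hzy : Z K * Y K = Y K * Z K + 2 * (Z K * H K) := by
    simpa only [Z, Y, H, map_mul, map_add, map_ofNat] using
      RingQuot.mkAlgHom_rel K (Rel.zy (K := K))
  rw [SemiconjBy, hzy, add_mul, two_smul, two_mul, add_mul, (commute_H_Z K).eq]

theorem semiconjBy_Z_pow_Y (a : ℕ) :
    SemiconjBy (Z K ^ a) (Y K) (Y K + (2 * (a : K)) • H K) := by
  have := (semiconjBy_Z_Y K).pow_left_add_nsmul ((commute_H_Z K).symm.smul_right (2 : K)) a
  rwa [← Nat.cast_smul_eq_nsmul K, smul_smul, mul_comm] at this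

theorem dp_smul (n : ℕ) (c : K) (u : Uh K) : dp K n (c • u) = c ^ n • dp K n u := by
  rw [dp, dp, smul_pow, smul_comm]

theorem _root_.SemiconjBy.dp {a : ℕ} {u v w : Uh K} (h : SemiconjBy (u ^ a) v w) (b : ℕ) :
    SemiconjBy (dp K a u) (dp K b v) (dp K b w) :=
  ((h.pow_right b).smul_right _).smul_left _

theorem _root_.Commute.dp {u v : Uh K} (h : Commute u v) (m n : ℕ) :
    Commute (dp K m u) (dp K n v) :=
  ((h.pow_pow m n).smul_right _).smul_left _

theorem dp_add_of_commute [CharZero K] {u v : Uh K} (h : Commute u v) (n : ℕ) :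
    dp K n (u + v) = ∑ k ∈ range (n + 1), dp K (n - k) u * dp K k v :=
  h.inv_factorial_smul_add_pow n

end UhSl2

open UhSl2

/-- In `U_h(sl₂)`: `(z^a/a!)(y^b/b!) = ∑_{k=0}^{b} (2a)^k (y^{b-k}/(b-k)!)(z^a/a!)(h^k/k!)`. -/
theorem zy_normal_order (K : Type*) [Field K] [CharZero K] (a b : ℕ) :
    dp K a (Z K) * dp K b (Y K) =
      ∑ k ∈ Finset.range (b + 1),
        ((2 * (a : K)) ^ k) • (dp K (b - k) (Y K) * dp K a (Z K) * dp K k (H K)) := by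
  have hYH : Commute (Y K) ((2 * (a : K)) • H K) := (commute_H_Y K).symm.smul_right _
  rw [((semiconjBy_Z_pow_Y K a).dp K b).eq, dp_add_of_commute K hYH, sum_mul]
  refine sum_congr rfl fun k _ => ?_
  rw [dp_smul, mul_smul_comm, smul_mul_assoc, mul_assoc, mul_assoc, ((commute_H_Z K).dp K k a).eq]
end

section
/- In U_h(sl₂), for all natural numbers b ≥ 1 the identity z · (x^b/b!) = (x^b/b!) · z - (x^{b-1}/(b-1)!) · (y + (b-1)h) · h holds. -/
namespace UhSl2

variable (K : Type*) [Field K]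

lemma rel_hx : H K * X K = X K * H K := by
  have := RingQuot.mkAlgHom_rel K (Rel.hx (K := K))
  simpa [H, X, map_mul] using this

lemma rel_yx : Y K * X K = X K * Y K + 2 * (X K * H K) := by
  have := RingQuot.mkAlgHom_rel K (Rel.yx (K := K))
  simpa [Y, X, H, map_mul, map_add, map_ofNat] using this

lemma rel_zx : Z K * X K = X K * Z K - Y K * H K := by
  have := RingQuot.mkAlgHom_rel K (Rel.zx (K := K))
  simpa [Z, X, Y, H, map_mul, map_sub] using this

lemma hx_pow (n : ℕ) : H K * X K ^ n = X K ^ n * H K := by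
  induction n with
  | zero => simp
  | succ n ih =>
    rw [pow_succ', ← mul_assoc, rel_hx, mul_assoc, ih, ← mul_assoc, ← pow_succ']

lemma yx_pow (n : ℕ) : Y K * X K ^ n = X K ^ n * Y K + (2 * n) • (X K ^ n * H K) := by
  induction n with
  | zero => simp
  | succ n ih =>
    rw [pow_succ', ← mul_assoc, rel_yx]
    rw [show (2 : Uh K) * (X K * H K) = (2 : ℕ) • (X K * H K) from by
      rw [two_nsmul, two_mul]]
    rw [add_mul, mul_assoc, ih, smul_mul_assoc, mul_assoc (X K) (H K), hx_pow]
    simp only [mul_add, mul_smul_comm, ← mul_assoc]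
    module

lemma zx_pow (n : ℕ) : Z K * X K ^ (n + 1) =
    X K ^ (n + 1) * Z K - (n + 1) • (X K ^ n * Y K * H K)
      - ((n + 1) * n) • (X K ^ n * H K * H K) := by
  induction n with
  | zero => simpa using rel_zx K
  | succ n ih =>
    rw [pow_succ', ← mul_assoc, rel_zx, sub_mul, mul_assoc, ih,
      mul_assoc (Y K) (H K), hx_pow, ← mul_assoc, yx_pow]
    simp only [mul_sub, mul_add, mul_smul_comm, smul_mul_assoc, add_mul, ← mul_assoc,
      ← pow_succ']
    module

end UhSl2

open UhSl2

/-- In `U_h(sl₂)`, for `b ≥ 1`: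
`z·(x^b/b!) = (x^b/b!)·z - (x^{b-1}/(b-1)!)·(y + (b-1)h)·h`. -/
theorem z_mul_dp_x (K : Type*) [Field K] [CharZero K] (b : ℕ) (hb : 1 ≤ b) :
    Z K * dp K b (X K) =
      dp K b (X K) * Z K -
        dp K (b - 1) (X K) * (Y K + ((b : K) - 1) • H K) * H K := by
  obtain ⟨n, rfl⟩ : ∃ n, b = n + 1 := ⟨b - 1, (Nat.succ_pred_eq_of_pos hb).symm⟩
  simp only [Nat.add_sub_cancel, dp]
  have hc : ((n + 1).factorial : K)⁻¹ * ((n : K) + 1) = ((n.factorial : K))⁻¹ := by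
    have h1 : ((n : K) + 1) ≠ 0 := Nat.cast_add_one_ne_zero n
    have h2 : ((n.factorial : K)) ≠ 0 := Nat.cast_ne_zero.mpr n.factorial_ne_zero
    rw [Nat.factorial_succ]
    push_cast
    rw [mul_inv, mul_comm ((n:K)+1)⁻¹, mul_assoc, inv_mul_cancel₀ h1, mul_one]
  rw [mul_smul_comm, zx_pow]
  push_cast
  rw [add_sub_cancel_right]
  simp only [smul_sub, smul_smul, (Nat.cast_smul_eq_nsmul K _ _).symm, smul_mul_assoc, mul_add, add_mul,
    mul_smul_comm, smul_smul]
  push_cast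
  rw [hc]
  rw [show (((n + 1).factorial : K))⁻¹ * ((n : K) * n + 1 * n)
      = (n : K) * ((n.factorial : K))⁻¹ from by rw [← hc]; ring]
  abel
end
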